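/- arXiv:1610.03385 — 9 statements merged into one kernel-verified Lean document; each statement's English description precedes it below -/
import Mathlib

section
/- Let t ≥ 0 and suppose 30t+17, 30t+19, 30t+23, 30t+29, 30t+31 are all prime. Let b = 30t+17 and a = 30t+19, and let H_a, H_b be the corresponding H-sequences. Then H_a(5) = 30t+29 and H_b(5) = 30t+23, so H_a(5) − H_b(5) = 6. -/
/-
Modulo 30, the integers strictly between 30t+17 and 30t+31 other than 30t+19, 30t+23 and 30t+29
are divisible by 2, 3 or 5, hence composite. Starting from 30t+19, the sequence must jump to the
next prime 30t+23, then take the composite 30t+24, then jump to the next prime 30t+29; starting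
from 30t+17 it goes 30t+19, 30t+20, 30t+23 in the same way.
-/

/-- The H-sequence with starting value `c`: `Hseq c 2 = c` and for `n ≥ 2`,
`Hseq c (n+1)` is the least `m > Hseq c n` with (`m` prime ↔ `n+1` prime). -/
noncomputable def Hseq (c : ℕ) : ℕ → ℕ
  | 0 => c
  | 1 => c
  | 2 => c
  | n + 3 => sInf {m | Hseq c (n + 2) < m ∧ (Nat.Prime m ↔ Nat.Prime (n + 3))}

theorem Hseq_two (c : ℕ) : Hseq c 2 = c := rfl

theorem Hseq_succ {c n : ℕ} (hn : 2 ≤ n) :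
    Hseq c (n + 1) = sInf {m | Hseq c n < m ∧ (m.Prime ↔ (n + 1).Prime)} := by
  obtain ⟨n, rfl⟩ : ∃ k, n = k + 2 := ⟨n - 2, by omega⟩
  rfl

theorem Hseq_succ_of_prime {c n k p : ℕ} (hn : 2 ≤ n) (hk : Hseq c n = k) (hn1 : (n + 1).Prime)
    (hp : p.Prime) (hkp : k < p) (hgap : ∀ m, k < m → m < p → ¬ m.Prime) :
    Hseq c (n + 1) = p := by
  rw [Hseq_succ hn, hk]
  refine IsLeast.csInf_eq ⟨⟨hkp, iff_of_true hp hn1⟩, fun m ⟨hkm, hm⟩ => ?_⟩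
  by_contra! hmp
  exact hgap m hkm hmp (hm.mpr hn1)

theorem Hseq_succ_of_not_prime {c n k : ℕ} (hn : 2 ≤ n) (hk : Hseq c n = k)
    (hn1 : ¬ (n + 1).Prime) (hk1 : ¬ (k + 1).Prime) : Hseq c (n + 1) = k + 1 := by
  rw [Hseq_succ hn, hk]
  exact IsLeast.csInf_eq ⟨⟨k.lt_succ_self, iff_of_false hk1 hn1⟩, fun _ ⟨hkm, _⟩ => hkm⟩

theorem not_prime_of_dvd_two_three_or_five {m : ℕ} (hm : 5 < m)
    (h : 2 ∣ m ∨ 3 ∣ m ∨ 5 ∣ m) : ¬ m.Prime := by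
  rcases h with h | h | h <;> exact Nat.not_prime_of_dvd_of_lt h (by norm_num) (by omega)

theorem not_prime_of_residues_have_small_factor {t lo hi m : ℕ} (hlo : 5 ≤ lo)
    (hres : ∀ r ∈ Finset.Ioo lo hi, 2 ∣ r ∨ 3 ∣ r ∨ 5 ∣ r)
    (h1 : 30*t+lo < m) (h2 : m < 30*t+hi) : ¬ m.Prime := by
  obtain ⟨r, rfl⟩ : ∃ r, m = 30*t+r := ⟨m - 30*t, by omega⟩
  have hr := hres r (Finset.mem_Ioo.mpr ⟨by omega, by omega⟩)
  exact not_prime_of_dvd_two_three_or_five (by omega) (by omega)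

theorem stmt0_general (t : ℕ) (h19 : Nat.Prime (30*t+19))
    (h23 : Nat.Prime (30*t+23)) (h29 : Nat.Prime (30*t+29)) :
    Hseq (30*t+19) 5 = 30*t+29 ∧ Hseq (30*t+17) 5 = 30*t+23 ∧
      Hseq (30*t+19) 5 - Hseq (30*t+17) 5 = 6 := by
  have h4 : ¬ Nat.Prime 4 := by norm_num
  have ha3 : Hseq (30*t+19) 3 = 30*t+23 :=
    Hseq_succ_of_prime le_rfl (Hseq_two _) Nat.prime_three h23 (by omega)
      fun _ => not_prime_of_residues_have_small_factor (by norm_num) (by decide)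
  have ha4 : Hseq (30*t+19) 4 = 30*t+24 :=
    Hseq_succ_of_not_prime (by norm_num) ha3 h4
      (not_prime_of_dvd_two_three_or_five (by omega) (by omega))
  have ha5 : Hseq (30*t+19) 5 = 30*t+29 :=
    Hseq_succ_of_prime (by norm_num) ha4 Nat.prime_five h29 (by omega)
      fun _ => not_prime_of_residues_have_small_factor (by norm_num) (by decide)
  have hb3 : Hseq (30*t+17) 3 = 30*t+19 :=
    Hseq_succ_of_prime le_rfl (Hseq_two _) Nat.prime_three h19 (by omega)
      fun _ => not_prime_of_residues_have_small_factor (by norm_num) (by decide)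
  have hb4 : Hseq (30*t+17) 4 = 30*t+20 :=
    Hseq_succ_of_not_prime (by norm_num) hb3 h4
      (not_prime_of_dvd_two_three_or_five (by omega) (by omega))
  have hb5 : Hseq (30*t+17) 5 = 30*t+23 :=
    Hseq_succ_of_prime (by norm_num) hb4 Nat.prime_five h23 (by omega)
      fun _ => not_prime_of_residues_have_small_factor (by norm_num) (by decide)
  exact ⟨ha5, hb5, by omega⟩

theorem stmt0 (t : ℕ) (h17 : Nat.Prime (30*t+17)) (h19 : Nat.Prime (30*t+19))
    (h23 : Nat.Prime (30*t+23)) (h29 : Nat.Prime (30*t+29)) (h31 : Nat.Prime (30*t+31)) :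
    Hseq (30*t+19) 5 = 30*t+29 ∧ Hseq (30*t+17) 5 = 30*t+23 ∧
      Hseq (30*t+19) 5 - Hseq (30*t+17) 5 = 6 :=
  stmt0_general t h19 h23 h29
end

section
/- Let t ≥ 0 and suppose 30t+17, 30t+19, 30t+23, 30t+29, 30t+31 are all prime. With b = 30t+17, a = 30t+19, we have H_a(n) − H_b(n) ≤ 6 for all n ≥ 2. -/
lemma Hseq_step (c n : ℕ) :
    Hseq c (n + 3) = sInf {m | Hseq c (n + 2) < m ∧ (Nat.Prime m ↔ Nat.Prime (n + 3))} := rfl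

lemma sInf_step (x k v : ℕ) (hv : x < v) (hpv : Nat.Prime v ↔ Nat.Prime k)
    (hmin : ∀ m, x < m → m < v → ¬(Nat.Prime m ↔ Nat.Prime k)) :
    sInf {m | x < m ∧ (Nat.Prime m ↔ Nat.Prime k)} = v := by
  have hvS : v ∈ {m | x < m ∧ (Nat.Prime m ↔ Nat.Prime k)} := ⟨hv, hpv⟩
  refine le_antisymm (Nat.sInf_le hvS) ?_
  by_contra h
  push_neg at h
  have hmem := Nat.sInf_mem (⟨v, hvS⟩ : Set.Nonempty {m | x < m ∧ (Nat.Prime m ↔ Nat.Prime k)})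
  exact hmin _ hmem.1 h hmem.2

lemma Hseq_step' (c n x v : ℕ) (hx : Hseq c (n + 2) = x) (hv : x < v)
    (hpv : Nat.Prime v ↔ Nat.Prime (n + 3))
    (hmin : ∀ m, x < m → m < v → ¬(Nat.Prime m ↔ Nat.Prime (n + 3))) :
    Hseq c (n + 3) = v := by
  rw [Hseq_step, hx]; exact sInf_step x (n + 3) v hv hpv hmin

lemma not_prime_of_eq_mul (a b n : ℕ) (ha : 2 ≤ a) (hb : 2 ≤ b) (h : n = a * b) :
    ¬ n.Prime := by
  subst h
  exact Nat.not_prime_mul (by omega) (by omega)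

theorem stmt2 (t : ℕ) (h17 : Nat.Prime (30*t+17)) (h19 : Nat.Prime (30*t+19))
    (h23 : Nat.Prime (30*t+23)) (h29 : Nat.Prime (30*t+29)) (h31 : Nat.Prime (30*t+31)) :
    ∀ n, 2 ≤ n → Hseq (30*t+19) n - Hseq (30*t+17) n ≤ 6 := by
  -- compositeness facts
  have c18 : ¬ Nat.Prime (30*t+18) := not_prime_of_eq_mul 2 (15*t+9) _ (by omega) (by omega) (by ring)
  have c20 : ¬ Nat.Prime (30*t+20) := not_prime_of_eq_mul 2 (15*t+10) _ (by omega) (by omega) (by ring)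
  have c21 : ¬ Nat.Prime (30*t+21) := not_prime_of_eq_mul 3 (10*t+7) _ (by omega) (by omega) (by ring)
  have c22 : ¬ Nat.Prime (30*t+22) := not_prime_of_eq_mul 2 (15*t+11) _ (by omega) (by omega) (by ring)
  have c24 : ¬ Nat.Prime (30*t+24) := not_prime_of_eq_mul 2 (15*t+12) _ (by omega) (by omega) (by ring)
  have c25 : ¬ Nat.Prime (30*t+25) := not_prime_of_eq_mul 5 (6*t+5) _ (by omega) (by omega) (by ring)
  have c26 : ¬ Nat.Prime (30*t+26) := not_prime_of_eq_mul 2 (15*t+13) _ (by omega) (by omega) (by ring)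
  have c27 : ¬ Nat.Prime (30*t+27) := not_prime_of_eq_mul 3 (10*t+9) _ (by omega) (by omega) (by ring)
  have c28 : ¬ Nat.Prime (30*t+28) := not_prime_of_eq_mul 2 (15*t+14) _ (by omega) (by omega) (by ring)
  have c30 : ¬ Nat.Prime (30*t+30) := not_prime_of_eq_mul 2 (15*t+15) _ (by omega) (by omega) (by ring)
  have c32 : ¬ Nat.Prime (30*t+32) := not_prime_of_eq_mul 2 (15*t+16) _ (by omega) (by omega) (by ring)
  have c33 : ¬ Nat.Prime (30*t+33) := not_prime_of_eq_mul 3 (10*t+11) _ (by omega) (by omega) (by ring)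
  have c34 : ¬ Nat.Prime (30*t+34) := not_prime_of_eq_mul 2 (15*t+17) _ (by omega) (by omega) (by ring)
  -- explicit values of the two sequences for n = 2 .. 10
  have e2b : Hseq (30*t+17) 2 = 30*t+17 := rfl
  have e2a : Hseq (30*t+19) 2 = 30*t+19 := rfl
  have e3b : Hseq (30*t+17) 3 = 30*t+19 := by
    refine Hseq_step' _ 0 _ _ e2b (by omega) (iff_of_true h19 (by norm_num)) ?_
    intro m h1 h2 hiff
    have hm : m = 30*t+18 := by omega
    subst hm
    exact c18 (hiff.mpr (by norm_num))
  have e3a : Hseq (30*t+19) 3 = 30*t+23 := by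
    refine Hseq_step' _ 0 _ _ e2a (by omega) (iff_of_true h23 (by norm_num)) ?_
    intro m h1 h2 hiff
    have hm : m = 30*t+20 ∨ m = 30*t+21 ∨ m = 30*t+22 := by omega
    rcases hm with hm | hm | hm <;> subst hm
    · exact c20 (hiff.mpr (by norm_num))
    · exact c21 (hiff.mpr (by norm_num))
    · exact c22 (hiff.mpr (by norm_num))
  have e4b : Hseq (30*t+17) 4 = 30*t+20 := by
    refine Hseq_step' _ 1 _ _ e3b (by omega) (iff_of_false c20 (by norm_num)) ?_
    intro m h1 h2 hiff
    omega
  have e4a : Hseq (30*t+19) 4 = 30*t+24 := by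
    refine Hseq_step' _ 1 _ _ e3a (by omega) (iff_of_false c24 (by norm_num)) ?_
    intro m h1 h2 hiff
    omega
  have e5b : Hseq (30*t+17) 5 = 30*t+23 := by
    refine Hseq_step' _ 2 _ _ e4b (by omega) (iff_of_true h23 (by norm_num)) ?_
    intro m h1 h2 hiff
    have hm : m = 30*t+21 ∨ m = 30*t+22 := by omega
    rcases hm with hm | hm <;> subst hm
    · exact c21 (hiff.mpr (by norm_num))
    · exact c22 (hiff.mpr (by norm_num))
  have e5a : Hseq (30*t+19) 5 = 30*t+29 := by
    refine Hseq_step' _ 2 _ _ e4a (by omega) (iff_of_true h29 (by norm_num)) ?_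
    intro m h1 h2 hiff
    have hm : m = 30*t+25 ∨ m = 30*t+26 ∨ m = 30*t+27 ∨ m = 30*t+28 := by omega
    rcases hm with hm | hm | hm | hm <;> subst hm
    · exact c25 (hiff.mpr (by norm_num))
    · exact c26 (hiff.mpr (by norm_num))
    · exact c27 (hiff.mpr (by norm_num))
    · exact c28 (hiff.mpr (by norm_num))
  have e6b : Hseq (30*t+17) 6 = 30*t+24 := by
    refine Hseq_step' _ 3 _ _ e5b (by omega) (iff_of_false c24 (by norm_num)) ?_
    intro m h1 h2 hiff
    omega
  have e6a : Hseq (30*t+19) 6 = 30*t+30 := by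
    refine Hseq_step' _ 3 _ _ e5a (by omega) (iff_of_false c30 (by norm_num)) ?_
    intro m h1 h2 hiff
    omega
  have e7b : Hseq (30*t+17) 7 = 30*t+29 := by
    refine Hseq_step' _ 4 _ _ e6b (by omega) (iff_of_true h29 (by norm_num)) ?_
    intro m h1 h2 hiff
    have hm : m = 30*t+25 ∨ m = 30*t+26 ∨ m = 30*t+27 ∨ m = 30*t+28 := by omega
    rcases hm with hm | hm | hm | hm <;> subst hm
    · exact c25 (hiff.mpr (by norm_num))
    · exact c26 (hiff.mpr (by norm_num))
    · exact c27 (hiff.mpr (by norm_num))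
    · exact c28 (hiff.mpr (by norm_num))
  have e7a : Hseq (30*t+19) 7 = 30*t+31 := by
    refine Hseq_step' _ 4 _ _ e6a (by omega) (iff_of_true h31 (by norm_num)) ?_
    intro m h1 h2 hiff
    omega
  have e8b : Hseq (30*t+17) 8 = 30*t+30 := by
    refine Hseq_step' _ 5 _ _ e7b (by omega) (iff_of_false c30 (by norm_num)) ?_
    intro m h1 h2 hiff
    omega
  have e8a : Hseq (30*t+19) 8 = 30*t+32 := by
    refine Hseq_step' _ 5 _ _ e7a (by omega) (iff_of_false c32 (by norm_num)) ?_
    intro m h1 h2 hiff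
    omega
  have e9b : Hseq (30*t+17) 9 = 30*t+32 := by
    refine Hseq_step' _ 6 _ _ e8b (by omega) (iff_of_false c32 (by norm_num)) ?_
    intro m h1 h2 hiff
    have hm : m = 30*t+31 := by omega
    subst hm
    exact (by norm_num : ¬ Nat.Prime 9) (hiff.mp h31)
  have e9a : Hseq (30*t+19) 9 = 30*t+33 := by
    refine Hseq_step' _ 6 _ _ e8a (by omega) (iff_of_false c33 (by norm_num)) ?_
    intro m h1 h2 hiff
    omega
  have e10b : Hseq (30*t+17) 10 = 30*t+33 := by
    refine Hseq_step' _ 7 _ _ e9b (by omega) (iff_of_false c33 (by norm_num)) ?_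
    intro m h1 h2 hiff
    omega
  have e10a : Hseq (30*t+19) 10 = 30*t+34 := by
    refine Hseq_step' _ 7 _ _ e9a (by omega) (iff_of_false c34 (by norm_num)) ?_
    intro m h1 h2 hiff
    omega
  -- the sequences merge at n = 11
  have base : Hseq (30*t+19) 11 = Hseq (30*t+17) 11 := by
    have hb11 : Hseq (30*t+17) 11 = sInf {m | 30*t+33 < m ∧ (Nat.Prime m ↔ Nat.Prime 11)} := by
      rw [← e10b]; rfl
    have ha11 : Hseq (30*t+19) 11 = sInf {m | 30*t+34 < m ∧ (Nat.Prime m ↔ Nat.Prime 11)} := by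
      rw [← e10a]; rfl
    rw [ha11, hb11]
    congr 1
    ext m
    simp only [Set.mem_setOf_eq]
    constructor
    · rintro ⟨h1, h2⟩
      exact ⟨by omega, h2⟩
    · rintro ⟨h1, h2⟩
      refine ⟨?_, h2⟩
      rcases Nat.lt_or_ge m (30*t+35) with h | h
      · have hm : m = 30*t+34 := by omega
        subst hm
        exact absurd (h2.mpr (by norm_num)) c34
      · omega
  have key : ∀ n, 11 ≤ n → Hseq (30*t+19) n = Hseq (30*t+17) n := by
    intro n hn
    induction n, hn using Nat.le_induction with
    | base => exact base
    | succ n hn ih =>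
      obtain ⟨k, rfl⟩ : ∃ k, n = k + 2 := ⟨n - 2, by omega⟩
      rw [Hseq_step, Hseq_step, ih]
  -- conclusion
  intro n hn
  rcases le_or_gt 11 n with h | h
  · rw [key n h]
    omega
  · interval_cases n
    · rw [e2a, e2b]; omega
    · rw [e3a, e3b]; omega
    · rw [e4a, e4b]; omega
    · rw [e5a, e5b]; omega
    · rw [e6a, e6b]; omega
    · rw [e7a, e7b]; omega
    · rw [e8a, e8b]; omega
    · rw [e9a, e9b]; omega
    · rw [e10a, e10b]; omega
end

section
/- Let t ≥ 0 and suppose 30t+11, 30t+13, 30t+17, 30t+19, 30t+23, 30t+29, 30t+31 are all prime. Let b = 30t+11, a = 30t+13. Then H_a(n) = H_b(n) for all n ≥ 17, and H_a(n) − H_b(n) ≤ 6 for all n ≥ 2, with equality exactly at n = 11 and n = 12. -/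
private lemma hstep {c : ℕ} (n k v : ℕ) (hk : Hseq c (n+2) = k)
    (h1 : k < v) (h2 : Nat.Prime v ↔ Nat.Prime (n+3))
    (h3 : ∀ m, k < m → m < v → ¬(Nat.Prime m ↔ Nat.Prime (n+3))) :
    Hseq c (n+3) = v := by
  have hvmem : v ∈ {m | Hseq c (n+2) < m ∧ (Nat.Prime m ↔ Nat.Prime (n+3))} := by
    rw [hk]; exact ⟨h1, h2⟩
  have hmem := Nat.sInf_mem ⟨v, hvmem⟩
  show sInf {m | Hseq c (n + 2) < m ∧ (Nat.Prime m ↔ Nat.Prime (n + 3))} = v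
  refine le_antisymm (Nat.sInf_le hvmem) ?_
  by_contra h
  push_neg at h
  exact h3 _ (by rw [← hk]; exact hmem.1) h hmem.2

private lemma npdvd {d x : ℕ} (h : d ∣ x) (h1 : 2 ≤ d) (h2 : d < x) : ¬ Nat.Prime x := by
  intro hp
  rcases hp.eq_one_or_self_of_dvd d h with h' | h' <;> omega

theorem stmt4 (t : ℕ) (h11 : Nat.Prime (30*t+11)) (h13 : Nat.Prime (30*t+13))
    (h17 : Nat.Prime (30*t+17)) (h19 : Nat.Prime (30*t+19)) (h23 : Nat.Prime (30*t+23))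
    (h29 : Nat.Prime (30*t+29)) (h31 : Nat.Prime (30*t+31)) :
    (∀ n, 17 ≤ n → Hseq (30*t+13) n = Hseq (30*t+11) n) ∧
      (∀ n, 2 ≤ n → Hseq (30*t+13) n - Hseq (30*t+11) n ≤ 6) ∧
      ∀ n, 2 ≤ n → (Hseq (30*t+13) n - Hseq (30*t+11) n = 6 ↔ n = 11 ∨ n = 12) := by
  -- non-primality facts
  have np12 : ¬ Nat.Prime (30*t+12) := npdvd (d := 2) ⟨15*t+6, by ring⟩ (by omega) (by omega)
  have np14 : ¬ Nat.Prime (30*t+14) := npdvd (d := 2) ⟨15*t+7, by ring⟩ (by omega) (by omega)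
  have np15 : ¬ Nat.Prime (30*t+15) := npdvd (d := 3) ⟨10*t+5, by ring⟩ (by omega) (by omega)
  have np16 : ¬ Nat.Prime (30*t+16) := npdvd (d := 2) ⟨15*t+8, by ring⟩ (by omega) (by omega)
  have np18 : ¬ Nat.Prime (30*t+18) := npdvd (d := 2) ⟨15*t+9, by ring⟩ (by omega) (by omega)
  have np20 : ¬ Nat.Prime (30*t+20) := npdvd (d := 2) ⟨15*t+10, by ring⟩ (by omega) (by omega)
  have np21 : ¬ Nat.Prime (30*t+21) := npdvd (d := 3) ⟨10*t+7, by ring⟩ (by omega) (by omega)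
  have np22 : ¬ Nat.Prime (30*t+22) := npdvd (d := 2) ⟨15*t+11, by ring⟩ (by omega) (by omega)
  have np24 : ¬ Nat.Prime (30*t+24) := npdvd (d := 2) ⟨15*t+12, by ring⟩ (by omega) (by omega)
  have np25 : ¬ Nat.Prime (30*t+25) := npdvd (d := 5) ⟨6*t+5, by ring⟩ (by omega) (by omega)
  have np26 : ¬ Nat.Prime (30*t+26) := npdvd (d := 2) ⟨15*t+13, by ring⟩ (by omega) (by omega)
  have np27 : ¬ Nat.Prime (30*t+27) := npdvd (d := 3) ⟨10*t+9, by ring⟩ (by omega) (by omega)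
  have np28 : ¬ Nat.Prime (30*t+28) := npdvd (d := 2) ⟨15*t+14, by ring⟩ (by omega) (by omega)
  have np30 : ¬ Nat.Prime (30*t+30) := npdvd (d := 2) ⟨15*t+15, by ring⟩ (by omega) (by omega)
  have np32 : ¬ Nat.Prime (30*t+32) := npdvd (d := 2) ⟨15*t+16, by ring⟩ (by omega) (by omega)
  have np33 : ¬ Nat.Prime (30*t+33) := npdvd (d := 3) ⟨10*t+11, by ring⟩ (by omega) (by omega)
  have np34 : ¬ Nat.Prime (30*t+34) := npdvd (d := 2) ⟨15*t+17, by ring⟩ (by omega) (by omega)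
  -- b-sequence values (b = 30t+11)
  have b2 : Hseq (30*t+11) 2 = 30*t+11 := rfl
  have b3 : Hseq (30*t+11) 3 = 30*t+13 := by
    refine hstep 0 _ _ b2 (by omega) (iff_of_true h13 (by norm_num)) ?_
    intro m hm1 hm2 hiff
    have : m = 30*t+12 := by omega
    subst this; exact np12 (hiff.mpr (by norm_num))
  have b4 : Hseq (30*t+11) 4 = 30*t+14 := by
    refine hstep 1 _ _ b3 (by omega) (iff_of_false np14 (by norm_num)) ?_
    intro m hm1 hm2; exact absurd hm2 (by omega)
  have b5 : Hseq (30*t+11) 5 = 30*t+17 := by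
    refine hstep 2 _ _ b4 (by omega) (iff_of_true h17 (by norm_num)) ?_
    intro m hm1 hm2 hiff
    have : m = 30*t+15 ∨ m = 30*t+16 := by omega
    rcases this with h | h <;> subst h
    · exact np15 (hiff.mpr (by norm_num))
    · exact np16 (hiff.mpr (by norm_num))
  have b6 : Hseq (30*t+11) 6 = 30*t+18 := by
    refine hstep 3 _ _ b5 (by omega) (iff_of_false np18 (by norm_num)) ?_
    intro m hm1 hm2; exact absurd hm2 (by omega)
  have b7 : Hseq (30*t+11) 7 = 30*t+19 := by
    refine hstep 4 _ _ b6 (by omega) (iff_of_true h19 (by norm_num)) ?_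
    intro m hm1 hm2; exact absurd hm2 (by omega)
  have b8 : Hseq (30*t+11) 8 = 30*t+20 := by
    refine hstep 5 _ _ b7 (by omega) (iff_of_false np20 (by norm_num)) ?_
    intro m hm1 hm2; exact absurd hm2 (by omega)
  have b9 : Hseq (30*t+11) 9 = 30*t+21 := by
    refine hstep 6 _ _ b8 (by omega) (iff_of_false np21 (by norm_num)) ?_
    intro m hm1 hm2; exact absurd hm2 (by omega)
  have b10 : Hseq (30*t+11) 10 = 30*t+22 := by
    refine hstep 7 _ _ b9 (by omega) (iff_of_false np22 (by norm_num)) ?_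
    intro m hm1 hm2; exact absurd hm2 (by omega)
  have b11 : Hseq (30*t+11) 11 = 30*t+23 := by
    refine hstep 8 _ _ b10 (by omega) (iff_of_true h23 (by norm_num)) ?_
    intro m hm1 hm2; exact absurd hm2 (by omega)
  have b12 : Hseq (30*t+11) 12 = 30*t+24 := by
    refine hstep 9 _ _ b11 (by omega) (iff_of_false np24 (by norm_num)) ?_
    intro m hm1 hm2; exact absurd hm2 (by omega)
  have b13 : Hseq (30*t+11) 13 = 30*t+29 := by
    refine hstep 10 _ _ b12 (by omega) (iff_of_true h29 (by norm_num)) ?_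
    intro m hm1 hm2 hiff
    have : m = 30*t+25 ∨ m = 30*t+26 ∨ m = 30*t+27 ∨ m = 30*t+28 := by omega
    rcases this with h | h | h | h <;> subst h
    · exact np25 (hiff.mpr (by norm_num))
    · exact np26 (hiff.mpr (by norm_num))
    · exact np27 (hiff.mpr (by norm_num))
    · exact np28 (hiff.mpr (by norm_num))
  have b14 : Hseq (30*t+11) 14 = 30*t+30 := by
    refine hstep 11 _ _ b13 (by omega) (iff_of_false np30 (by norm_num)) ?_
    intro m hm1 hm2; exact absurd hm2 (by omega)
  have b15 : Hseq (30*t+11) 15 = 30*t+32 := by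
    refine hstep 12 _ _ b14 (by omega) (iff_of_false np32 (by norm_num)) ?_
    intro m hm1 hm2 hiff
    have : m = 30*t+31 := by omega
    subst this
    exact (by norm_num : ¬ Nat.Prime 15) (hiff.mp h31)
  have b16 : Hseq (30*t+11) 16 = 30*t+33 := by
    refine hstep 13 _ _ b15 (by omega) (iff_of_false np33 (by norm_num)) ?_
    intro m hm1 hm2; exact absurd hm2 (by omega)
  -- a-sequence values (a = 30t+13)
  have a2 : Hseq (30*t+13) 2 = 30*t+13 := rfl
  have a3 : Hseq (30*t+13) 3 = 30*t+17 := by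
    refine hstep 0 _ _ a2 (by omega) (iff_of_true h17 (by norm_num)) ?_
    intro m hm1 hm2 hiff
    have : m = 30*t+14 ∨ m = 30*t+15 ∨ m = 30*t+16 := by omega
    rcases this with h | h | h <;> subst h
    · exact np14 (hiff.mpr (by norm_num))
    · exact np15 (hiff.mpr (by norm_num))
    · exact np16 (hiff.mpr (by norm_num))
  have a4 : Hseq (30*t+13) 4 = 30*t+18 := by
    refine hstep 1 _ _ a3 (by omega) (iff_of_false np18 (by norm_num)) ?_
    intro m hm1 hm2; exact absurd hm2 (by omega)
  have a5 : Hseq (30*t+13) 5 = 30*t+19 := by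
    refine hstep 2 _ _ a4 (by omega) (iff_of_true h19 (by norm_num)) ?_
    intro m hm1 hm2; exact absurd hm2 (by omega)
  have a6 : Hseq (30*t+13) 6 = 30*t+20 := by
    refine hstep 3 _ _ a5 (by omega) (iff_of_false np20 (by norm_num)) ?_
    intro m hm1 hm2; exact absurd hm2 (by omega)
  have a7 : Hseq (30*t+13) 7 = 30*t+23 := by
    refine hstep 4 _ _ a6 (by omega) (iff_of_true h23 (by norm_num)) ?_
    intro m hm1 hm2 hiff
    have : m = 30*t+21 ∨ m = 30*t+22 := by omega
    rcases this with h | h <;> subst h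
    · exact np21 (hiff.mpr (by norm_num))
    · exact np22 (hiff.mpr (by norm_num))
  have a8 : Hseq (30*t+13) 8 = 30*t+24 := by
    refine hstep 5 _ _ a7 (by omega) (iff_of_false np24 (by norm_num)) ?_
    intro m hm1 hm2; exact absurd hm2 (by omega)
  have a9 : Hseq (30*t+13) 9 = 30*t+25 := by
    refine hstep 6 _ _ a8 (by omega) (iff_of_false np25 (by norm_num)) ?_
    intro m hm1 hm2; exact absurd hm2 (by omega)
  have a10 : Hseq (30*t+13) 10 = 30*t+26 := by
    refine hstep 7 _ _ a9 (by omega) (iff_of_false np26 (by norm_num)) ?_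
    intro m hm1 hm2; exact absurd hm2 (by omega)
  have a11 : Hseq (30*t+13) 11 = 30*t+29 := by
    refine hstep 8 _ _ a10 (by omega) (iff_of_true h29 (by norm_num)) ?_
    intro m hm1 hm2 hiff
    have : m = 30*t+27 ∨ m = 30*t+28 := by omega
    rcases this with h | h <;> subst h
    · exact np27 (hiff.mpr (by norm_num))
    · exact np28 (hiff.mpr (by norm_num))
  have a12 : Hseq (30*t+13) 12 = 30*t+30 := by
    refine hstep 9 _ _ a11 (by omega) (iff_of_false np30 (by norm_num)) ?_
    intro m hm1 hm2; exact absurd hm2 (by omega)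
  have a13 : Hseq (30*t+13) 13 = 30*t+31 := by
    refine hstep 10 _ _ a12 (by omega) (iff_of_true h31 (by norm_num)) ?_
    intro m hm1 hm2; exact absurd hm2 (by omega)
  have a14 : Hseq (30*t+13) 14 = 30*t+32 := by
    refine hstep 11 _ _ a13 (by omega) (iff_of_false np32 (by norm_num)) ?_
    intro m hm1 hm2; exact absurd hm2 (by omega)
  have a15 : Hseq (30*t+13) 15 = 30*t+33 := by
    refine hstep 12 _ _ a14 (by omega) (iff_of_false np33 (by norm_num)) ?_
    intro m hm1 hm2; exact absurd hm2 (by omega)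
  have a16 : Hseq (30*t+13) 16 = 30*t+34 := by
    refine hstep 13 _ _ a15 (by omega) (iff_of_false np34 (by norm_num)) ?_
    intro m hm1 hm2; exact absurd hm2 (by omega)
  -- base case n = 17
  have eq17 : Hseq (30*t+13) 17 = Hseq (30*t+11) 17 := by
    show sInf {m | Hseq (30*t+13) 16 < m ∧ (Nat.Prime m ↔ Nat.Prime 17)}
        = sInf {m | Hseq (30*t+11) 16 < m ∧ (Nat.Prime m ↔ Nat.Prime 17)}
    rw [a16, b16]
    congr 1
    ext m
    simp only [Set.mem_setOf_eq]
    constructor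
    · rintro ⟨h1, h2⟩; exact ⟨by omega, h2⟩
    · rintro ⟨h1, h2⟩
      refine ⟨?_, h2⟩
      rcases eq_or_lt_of_le (by omega : 30*t+34 ≤ m) with h | h
      · exact absurd (h2.mpr (by norm_num)) (h ▸ np34)
      · exact h
  -- equality for n ≥ 17
  have heq : ∀ n, 17 ≤ n → Hseq (30*t+13) n = Hseq (30*t+11) n := by
    intro n hn
    induction n, hn using Nat.le_induction with
    | base => exact eq17
    | succ n hn ih =>
      obtain ⟨k, rfl⟩ : ∃ k, n = k + 2 := ⟨n - 2, by omega⟩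
      show sInf {m | Hseq (30*t+13) (k+2) < m ∧ (Nat.Prime m ↔ Nat.Prime (k+3))}
          = sInf {m | Hseq (30*t+11) (k+2) < m ∧ (Nat.Prime m ↔ Nat.Prime (k+3))}
      rw [ih]
  refine ⟨heq, ?_, ?_⟩
  · intro n hn
    rcases le_or_gt n 16 with h | h
    · interval_cases n <;>
        simp only [a2, a3, a4, a5, a6, a7, a8, a9, a10, a11, a12, a13, a14, a15, a16,
          b2, b3, b4, b5, b6, b7, b8, b9, b10, b11, b12, b13, b14, b15, b16] <;> omega
    · rw [heq n (by omega)]; omega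
  · intro n hn
    rcases le_or_gt n 16 with h | h
    · interval_cases n <;>
        simp only [a2, a3, a4, a5, a6, a7, a8, a9, a10, a11, a12, a13, a14, a15, a16,
          b2, b3, b4, b5, b6, b7, b8, b9, b10, b11, b12, b13, b14, b15, b16] <;>
        first
          | omega
          | (rw [iff_true_intro (by omega : (30:ℕ)*t+29 - (30*t+23) = 6)]; simp)
          | (rw [iff_true_intro (by omega : (30:ℕ)*t+30 - (30*t+24) = 6)]; simp)
    · rw [heq n (by omega)]; omega
end

section
/- Let t ≥ 0, b = 30t+17, a = 30t+19 with b and a both prime (twin primes), and suppose 30t+23 is composite. Then H_a(3) ≥ 30t+29 and H_b(3) = 30t+19, so H_a(3) − H_b(3) ≥ 10; in particular the least n with H_a(n) − H_b(n) > 6 is n = 3. -/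
lemma Hseq3 (c : ℕ) : Hseq c 3 = sInf {m | c < m ∧ Nat.Prime m} := by
  show Hseq c (0 + 3) = _
  rw [Hseq]
  congr 1
  ext m
  simp [Hseq, Nat.prime_three]

lemma not_prime_of_div {d m : ℕ} (hd : d ∣ m) (h1 : 1 < d) (h2 : d < m) :
    ¬ Nat.Prime m := fun hp => by
  rcases (hp.eq_one_or_self_of_dvd d hd) with h | h <;> omega

theorem stmt5 (t : ℕ) (hb : Nat.Prime (30*t+17)) (ha : Nat.Prime (30*t+19))
    (hc : ¬ Nat.Prime (30*t+23)) :
    30*t+29 ≤ Hseq (30*t+19) 3 ∧ Hseq (30*t+17) 3 = 30*t+19 ∧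
      10 ≤ Hseq (30*t+19) 3 - Hseq (30*t+17) 3 ∧
      IsLeast {n | 2 ≤ n ∧ 6 < Hseq (30*t+19) n - Hseq (30*t+17) n} 3 := by
  have hcomp : ∀ m, 30*t+19 < m → m < 30*t+29 → ¬ Nat.Prime m := by
    intro m h1 h2
    have : m = 30*t+20 ∨ m = 30*t+21 ∨ m = 30*t+22 ∨ m = 30*t+23 ∨ m = 30*t+24 ∨
        m = 30*t+25 ∨ m = 30*t+26 ∨ m = 30*t+27 ∨ m = 30*t+28 := by omega
    rcases this with h|h|h|h|h|h|h|h|h <;> subst h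
    · exact not_prime_of_div (d := 2) ⟨15*t+10, by ring⟩ (by norm_num) (by omega)
    · exact not_prime_of_div (d := 3) ⟨10*t+7, by ring⟩ (by norm_num) (by omega)
    · exact not_prime_of_div (d := 2) ⟨15*t+11, by ring⟩ (by norm_num) (by omega)
    · exact hc
    · exact not_prime_of_div (d := 2) ⟨15*t+12, by ring⟩ (by norm_num) (by omega)
    · exact not_prime_of_div (d := 5) ⟨6*t+5, by ring⟩ (by norm_num) (by omega)
    · exact not_prime_of_div (d := 2) ⟨15*t+13, by ring⟩ (by norm_num) (by omega)
    · exact not_prime_of_div (d := 3) ⟨10*t+9, by ring⟩ (by norm_num) (by omega)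
    · exact not_prime_of_div (d := 2) ⟨15*t+14, by ring⟩ (by norm_num) (by omega)
  have hA : 30*t+29 ≤ Hseq (30*t+19) 3 := by
    rw [Hseq3]
    obtain ⟨p, hp1, hp2⟩ := Nat.exists_infinite_primes (30*t+20)
    have hne : {m | 30*t+19 < m ∧ Nat.Prime m}.Nonempty := ⟨p, by omega, hp2⟩
    obtain ⟨h1, h2⟩ := Nat.sInf_mem hne
    by_contra h
    exact hcomp _ h1 (by omega) h2
  have hB : Hseq (30*t+17) 3 = 30*t+19 := by
    rw [Hseq3]
    apply le_antisymm
    · exact Nat.sInf_le ⟨by omega, ha⟩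
    · refine le_csInf ⟨30*t+19, ?_⟩ ?_
      · exact ⟨by omega, ha⟩
      rintro m ⟨h1, h2⟩
      by_contra h
      have : m = 30*t+18 := by omega
      subst this
      exact not_prime_of_div (d := 2) ⟨15*t+9, by ring⟩ (by norm_num) (by omega) h2
  refine ⟨hA, hB, by omega, ⟨by norm_num; omega, ?_⟩⟩
  rintro n ⟨h2, h6⟩
  by_contra h
  have : n = 2 := by omega
  subst this
  simp only [Hseq] at h6
  omega
end

section
/- Let t ≥ 0, b = 30t+17, a = 30t+19 be twin primes. Then max over n ≥ 2 of (H_a(n) − H_b(n)) is at most 6 if and only if 30t+23, 30t+29, 30t+31 are all prime, i.e. if and only if 30t+17, 30t+19, 30t+23, 30t+29, 30t+31 form a constellation p, p+2, p+6, p+12, p+14 of five consecutive primes. -/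
/-- A list of primes, strictly increasing, with no other primes in between. -/
def ConsecPrimes (l : List ℕ) : Prop :=
  l.Chain' (· < ·) ∧ (∀ x ∈ l, Nat.Prime x) ∧
    ∀ q, Nat.Prime q → l.headI ≤ q → q ≤ l.getLast! → q ∈ l

/-!
For `n ≤ 10` both sequences are computed explicitly: between `30t+17` and `30t+37` the only
candidates for primes are `30t+19, 30t+23, 30t+29, 30t+31`. When all four are prime, the
sequences read `17, 19, 20, 23, 24, 29, 30, 32, 33` and `19, 23, 24, 29, 30, 31, 32, 33, 34`
(offsets from `30t`), and since `30t+34` is composite both continue with the least prime after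
`30t+33` at `n = 11`, so they coincide from then on. Conversely, at the prime indices `3, 5, 7`
the sequence from `30t+19` has to take a prime at most `6` above the other sequence's value,
which forces `30t+23`, `30t+29` and `30t+31` in turn.
-/

theorem exists_lt_and_prime_iff (x : ℕ) (P : Prop) : ∃ m, x < m ∧ (m.Prime ↔ P) := by
  by_cases hP : P
  · obtain ⟨p, hxp, hp⟩ := Nat.exists_infinite_primes (x + 1)
    exact ⟨p, hxp, iff_of_true hp hP⟩
  · refine ⟨2 * (x + 2), by omega, iff_of_false ?_ hP⟩
    exact Nat.not_prime_mul (by norm_num) (by omega)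

namespace Hseq

variable {c d n x y : ℕ}

theorem apply_two (c : ℕ) : Hseq c 2 = c := rfl

theorem succ_eq_sInf (hn : 2 ≤ n) :
    Hseq c (n + 1) = sInf {m | Hseq c n < m ∧ (m.Prime ↔ (n + 1).Prime)} := by
  obtain ⟨k, rfl⟩ : ∃ k, n = k + 2 := ⟨n - 2, by omega⟩
  rfl

theorem isLeast_succ (hn : 2 ≤ n) :
    IsLeast {m | Hseq c n < m ∧ (m.Prime ↔ (n + 1).Prime)} (Hseq c (n + 1)) := by
  rw [succ_eq_sInf hn]
  exact isLeast_csInf (exists_lt_and_prime_iff _ _)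

theorem succ_eq (hn : 2 ≤ n) (hx : Hseq c n = x) (hxy : x < y) (hy : y.Prime ↔ (n + 1).Prime)
    (hgap : ∀ z, x < z → z < y → ¬(z.Prime ↔ (n + 1).Prime)) : Hseq c (n + 1) = y := by
  refine (isLeast_succ hn).unique ⟨⟨hx ▸ hxy, hy⟩, fun z ⟨hxz, hz⟩ => ?_⟩
  by_contra! hzy
  exact hgap z (hx ▸ hxz) hzy hz

theorem succ_eq_of_prime (hn : 2 ≤ n) (hx : Hseq c n = x) (hn1 : (n + 1).Prime) (hxy : x < y)
    (hy : y.Prime) (hgap : ∀ z, x < z → z < y → ¬z.Prime) : Hseq c (n + 1) = y :=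
  succ_eq hn hx hxy (iff_of_true hy hn1) fun z hxz hzy hz => hgap z hxz hzy (hz.2 hn1)

theorem succ_eq_of_not_prime (hn : 2 ≤ n) (hx : Hseq c n = x) (hn1 : ¬(n + 1).Prime)
    (hxy : x < y) (hy : ¬y.Prime) (hgap : ∀ z, x < z → z < y → z.Prime) :
    Hseq c (n + 1) = y :=
  succ_eq hn hx hxy (iff_of_false hy hn1) fun z hxz hzy hz => hn1 (hz.1 (hgap z hxz hzy))

theorem prime_of_succ_le {q : ℕ} (hn : 2 ≤ n) (hn1 : (n + 1).Prime) (hx : Hseq c n = x)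
    (hle : Hseq c (n + 1) ≤ y) (hcomp : ∀ z, x < z → z ≤ y → z ≠ q → ¬z.Prime) :
    q.Prime := by
  obtain ⟨hlt, hp⟩ := (isLeast_succ (c := c) hn).1
  by_contra hq
  exact hcomp _ (hx ▸ hlt) hle (fun h => hq (h ▸ hp.2 hn1)) (hp.2 hn1)

theorem succ_eq_succ_of_le (hn : 2 ≤ n) (hle : Hseq c n ≤ Hseq d n)
    (hgap : ∀ z, Hseq c n < z → z ≤ Hseq d n → ¬(z.Prime ↔ (n + 1).Prime)) :
    Hseq c (n + 1) = Hseq d (n + 1) := by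
  obtain ⟨⟨hlt, hd⟩, hleast⟩ := isLeast_succ (c := d) hn
  refine (isLeast_succ hn).unique ⟨⟨hle.trans_lt hlt, hd⟩, fun z ⟨hcz, hz⟩ => ?_⟩
  by_contra! hzd
  rcases le_or_gt z (Hseq d n) with hdz | hdz
  · exact hgap z hcz hdz hz
  · exact (hleast ⟨hdz, hz⟩).not_gt hzd

theorem eq_of_eq_of_le (hn : 2 ≤ n) (h : Hseq c n = Hseq d n) {m : ℕ} (hm : n ≤ m) :
    Hseq c m = Hseq d m := by
  induction m, hm using Nat.le_induction with
  | base => exact h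
  | succ k hk ih => rw [succ_eq_sInf (hn.trans hk), succ_eq_sInf (hn.trans hk), ih]

end Hseq

theorem Nat.not_prime_of_mod_thirty {z : ℕ} (hz : 5 < z)
    (h : ¬(z % 30 = 1 ∨ z % 30 = 7 ∨ z % 30 = 11 ∨ z % 30 = 13 ∨ z % 30 = 17 ∨
      z % 30 = 19 ∨ z % 30 = 23 ∨ z % 30 = 29)) :
    ¬z.Prime := by
  intro hp
  have h2 : ¬2 ∣ z := fun h => Nat.not_prime_of_dvd_of_lt h le_rfl (by omega) hp
  have h3 : ¬3 ∣ z := fun h => Nat.not_prime_of_dvd_of_lt h (by norm_num) (by omega) hp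
  have h5 : ¬5 ∣ z := fun h => Nat.not_prime_of_dvd_of_lt h (by norm_num) (by omega) hp
  have hr : z % 30 < 30 := Nat.mod_lt _ (by norm_num)
  interval_cases hmod : z % 30 <;> omega

section Constellation

open Nat

variable {t : ℕ}

theorem Hseq_add_seventeen_three (h19 : (30 * t + 19).Prime) :
    Hseq (30 * t + 17) 3 = 30 * t + 19 :=
  Hseq.succ_eq_of_prime le_rfl (Hseq.apply_two _) prime_three (by omega) h19 fun _ _ _ =>
    not_prime_of_mod_thirty (by omega) (by omega)

theorem Hseq_add_seventeen_four (h19 : (30 * t + 19).Prime) :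
    Hseq (30 * t + 17) 4 = 30 * t + 20 :=
  Hseq.succ_eq_of_not_prime (by norm_num) (Hseq_add_seventeen_three h19) (by norm_num) (by omega)
    (not_prime_of_mod_thirty (by omega) (by omega)) (by omega)

theorem Hseq_add_seventeen_five (h19 : (30 * t + 19).Prime) (h23 : (30 * t + 23).Prime) :
    Hseq (30 * t + 17) 5 = 30 * t + 23 :=
  Hseq.succ_eq_of_prime (by norm_num) (Hseq_add_seventeen_four h19) (by norm_num) (by omega) h23
    fun _ _ _ => not_prime_of_mod_thirty (by omega) (by omega)

theorem Hseq_add_seventeen_six (h19 : (30 * t + 19).Prime) (h23 : (30 * t + 23).Prime) :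
    Hseq (30 * t + 17) 6 = 30 * t + 24 :=
  Hseq.succ_eq_of_not_prime (by norm_num) (Hseq_add_seventeen_five h19 h23) (by norm_num)
    (by omega) (not_prime_of_mod_thirty (by omega) (by omega)) (by omega)

theorem Hseq_add_seventeen_seven (h19 : (30 * t + 19).Prime) (h23 : (30 * t + 23).Prime)
    (h29 : (30 * t + 29).Prime) : Hseq (30 * t + 17) 7 = 30 * t + 29 :=
  Hseq.succ_eq_of_prime (by norm_num) (Hseq_add_seventeen_six h19 h23) (by norm_num) (by omega)
    h29 fun _ _ _ => not_prime_of_mod_thirty (by omega) (by omega)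

theorem Hseq_add_seventeen_eight (h19 : (30 * t + 19).Prime) (h23 : (30 * t + 23).Prime)
    (h29 : (30 * t + 29).Prime) : Hseq (30 * t + 17) 8 = 30 * t + 30 :=
  Hseq.succ_eq_of_not_prime (by norm_num) (Hseq_add_seventeen_seven h19 h23 h29) (by norm_num)
    (by omega) (not_prime_of_mod_thirty (by omega) (by omega)) (by omega)

theorem Hseq_add_seventeen_nine (h19 : (30 * t + 19).Prime) (h23 : (30 * t + 23).Prime)
    (h29 : (30 * t + 29).Prime) (h31 : (30 * t + 31).Prime) :
    Hseq (30 * t + 17) 9 = 30 * t + 32 :=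
  Hseq.succ_eq_of_not_prime (by norm_num) (Hseq_add_seventeen_eight h19 h23 h29) (by norm_num)
    (by omega) (not_prime_of_mod_thirty (by omega) (by omega))
    fun z _ _ => (show z = 30 * t + 31 by omega) ▸ h31

theorem Hseq_add_seventeen_ten (h19 : (30 * t + 19).Prime) (h23 : (30 * t + 23).Prime)
    (h29 : (30 * t + 29).Prime) (h31 : (30 * t + 31).Prime) :
    Hseq (30 * t + 17) 10 = 30 * t + 33 :=
  Hseq.succ_eq_of_not_prime (by norm_num) (Hseq_add_seventeen_nine h19 h23 h29 h31) (by norm_num)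
    (by omega) (not_prime_of_mod_thirty (by omega) (by omega)) (by omega)

theorem Hseq_add_nineteen_three (h23 : (30 * t + 23).Prime) :
    Hseq (30 * t + 19) 3 = 30 * t + 23 :=
  Hseq.succ_eq_of_prime le_rfl (Hseq.apply_two _) prime_three (by omega) h23 fun _ _ _ =>
    not_prime_of_mod_thirty (by omega) (by omega)

theorem Hseq_add_nineteen_four (h23 : (30 * t + 23).Prime) :
    Hseq (30 * t + 19) 4 = 30 * t + 24 :=
  Hseq.succ_eq_of_not_prime (by norm_num) (Hseq_add_nineteen_three h23) (by norm_num) (by omega)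
    (not_prime_of_mod_thirty (by omega) (by omega)) (by omega)

theorem Hseq_add_nineteen_five (h23 : (30 * t + 23).Prime) (h29 : (30 * t + 29).Prime) :
    Hseq (30 * t + 19) 5 = 30 * t + 29 :=
  Hseq.succ_eq_of_prime (by norm_num) (Hseq_add_nineteen_four h23) (by norm_num) (by omega) h29
    fun _ _ _ => not_prime_of_mod_thirty (by omega) (by omega)

theorem Hseq_add_nineteen_six (h23 : (30 * t + 23).Prime) (h29 : (30 * t + 29).Prime) :
    Hseq (30 * t + 19) 6 = 30 * t + 30 :=
  Hseq.succ_eq_of_not_prime (by norm_num) (Hseq_add_nineteen_five h23 h29) (by norm_num)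
    (by omega) (not_prime_of_mod_thirty (by omega) (by omega)) (by omega)

theorem Hseq_add_nineteen_seven (h23 : (30 * t + 23).Prime) (h29 : (30 * t + 29).Prime)
    (h31 : (30 * t + 31).Prime) : Hseq (30 * t + 19) 7 = 30 * t + 31 :=
  Hseq.succ_eq_of_prime (by norm_num) (Hseq_add_nineteen_six h23 h29) (by norm_num) (by omega)
    h31 (by omega)

theorem Hseq_add_nineteen_eight (h23 : (30 * t + 23).Prime) (h29 : (30 * t + 29).Prime)
    (h31 : (30 * t + 31).Prime) : Hseq (30 * t + 19) 8 = 30 * t + 32 :=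
  Hseq.succ_eq_of_not_prime (by norm_num) (Hseq_add_nineteen_seven h23 h29 h31) (by norm_num)
    (by omega) (not_prime_of_mod_thirty (by omega) (by omega)) (by omega)

theorem Hseq_add_nineteen_nine (h23 : (30 * t + 23).Prime) (h29 : (30 * t + 29).Prime)
    (h31 : (30 * t + 31).Prime) : Hseq (30 * t + 19) 9 = 30 * t + 33 :=
  Hseq.succ_eq_of_not_prime (by norm_num) (Hseq_add_nineteen_eight h23 h29 h31) (by norm_num)
    (by omega) (not_prime_of_mod_thirty (by omega) (by omega)) (by omega)

theorem Hseq_add_nineteen_ten (h23 : (30 * t + 23).Prime) (h29 : (30 * t + 29).Prime)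
    (h31 : (30 * t + 31).Prime) : Hseq (30 * t + 19) 10 = 30 * t + 34 :=
  Hseq.succ_eq_of_not_prime (by norm_num) (Hseq_add_nineteen_nine h23 h29 h31) (by norm_num)
    (by omega) (not_prime_of_mod_thirty (by omega) (by omega)) (by omega)

theorem Hseq_add_nineteen_eq_add_seventeen (h19 : (30 * t + 19).Prime)
    (h23 : (30 * t + 23).Prime) (h29 : (30 * t + 29).Prime) (h31 : (30 * t + 31).Prime)
    {n : ℕ} (hn : 11 ≤ n) : Hseq (30 * t + 19) n = Hseq (30 * t + 17) n := by
  have h₁₀ := Hseq_add_seventeen_ten h19 h23 h29 h31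
  have h₁₀' := Hseq_add_nineteen_ten h23 h29 h31
  refine Hseq.eq_of_eq_of_le (n := 11) (by norm_num) ?_ hn
  refine (Hseq.succ_eq_succ_of_le (n := 10) (by norm_num) (by omega) fun _ _ _ hz => ?_).symm
  exact not_prime_of_mod_thirty (by omega) (by omega) (hz.2 (by norm_num))

theorem Hseq_sub_le_six_of_primes (h19 : (30 * t + 19).Prime) (h23 : (30 * t + 23).Prime)
    (h29 : (30 * t + 29).Prime) (h31 : (30 * t + 31).Prime) {n : ℕ} (hn : 2 ≤ n) :
    Hseq (30 * t + 19) n - Hseq (30 * t + 17) n ≤ 6 := by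
  rcases le_or_gt n 10 with hn₁₀ | hn₁₀
  · interval_cases n
    · simp only [Hseq.apply_two]; omega
    · rw [Hseq_add_nineteen_three h23, Hseq_add_seventeen_three h19]; omega
    · rw [Hseq_add_nineteen_four h23, Hseq_add_seventeen_four h19]; omega
    · rw [Hseq_add_nineteen_five h23 h29, Hseq_add_seventeen_five h19 h23]; omega
    · rw [Hseq_add_nineteen_six h23 h29, Hseq_add_seventeen_six h19 h23]; omega
    · rw [Hseq_add_nineteen_seven h23 h29 h31, Hseq_add_seventeen_seven h19 h23 h29]; omega
    · rw [Hseq_add_nineteen_eight h23 h29 h31, Hseq_add_seventeen_eight h19 h23 h29]; omega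
    · rw [Hseq_add_nineteen_nine h23 h29 h31, Hseq_add_seventeen_nine h19 h23 h29 h31]; omega
    · rw [Hseq_add_nineteen_ten h23 h29 h31, Hseq_add_seventeen_ten h19 h23 h29 h31]; omega
  · rw [Hseq_add_nineteen_eq_add_seventeen h19 h23 h29 h31 hn₁₀, Nat.sub_self]
    exact Nat.zero_le _

theorem primes_of_Hseq_sub_le_six (h19 : (30 * t + 19).Prime)
    (h : ∀ n, 2 ≤ n → Hseq (30 * t + 19) n - Hseq (30 * t + 17) n ≤ 6) :
    (30 * t + 23).Prime ∧ (30 * t + 29).Prime ∧ (30 * t + 31).Prime := by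
  have h23 : (30 * t + 23).Prime := by
    have hle : Hseq (30 * t + 19) 3 ≤ 30 * t + 25 := by
      have h3 := h 3 (by norm_num)
      rw [Hseq_add_seventeen_three h19] at h3
      omega
    exact Hseq.prime_of_succ_le le_rfl prime_three (Hseq.apply_two _) hle
      fun _ _ _ _ => not_prime_of_mod_thirty (by omega) (by omega)
  have h29 : (30 * t + 29).Prime := by
    have hle : Hseq (30 * t + 19) 5 ≤ 30 * t + 29 := by
      have h5 := h 5 (by norm_num)
      rw [Hseq_add_seventeen_five h19 h23] at h5
      omega
    exact Hseq.prime_of_succ_le (by norm_num) (by norm_num) (Hseq_add_nineteen_four h23) hle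
      fun _ _ _ _ => not_prime_of_mod_thirty (by omega) (by omega)
  have h31 : (30 * t + 31).Prime := by
    have hle : Hseq (30 * t + 19) 7 ≤ 30 * t + 35 := by
      have h7 := h 7 (by norm_num)
      rw [Hseq_add_seventeen_seven h19 h23 h29] at h7
      omega
    exact Hseq.prime_of_succ_le (by norm_num) (by norm_num) (Hseq_add_nineteen_six h23 h29) hle
      fun _ _ _ _ => not_prime_of_mod_thirty (by omega) (by omega)
  exact ⟨h23, h29, h31⟩

theorem Hseq_sub_le_six_iff (h19 : (30 * t + 19).Prime) :
    (∀ n, 2 ≤ n → Hseq (30 * t + 19) n - Hseq (30 * t + 17) n ≤ 6) ↔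
      (30 * t + 23).Prime ∧ (30 * t + 29).Prime ∧ (30 * t + 31).Prime :=
  ⟨primes_of_Hseq_sub_le_six h19, fun ⟨h23, h29, h31⟩ _ hn =>
    Hseq_sub_le_six_of_primes h19 h23 h29 h31 hn⟩

theorem consecPrimes_iff (h17 : (30 * t + 17).Prime) (h19 : (30 * t + 19).Prime) :
    ConsecPrimes [30 * t + 17, 30 * t + 19, 30 * t + 23, 30 * t + 29, 30 * t + 31] ↔
      (30 * t + 23).Prime ∧ (30 * t + 29).Prime ∧ (30 * t + 31).Prime := by
  constructor
  · rintro ⟨-, hprime, -⟩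
    exact ⟨hprime _ (by simp), hprime _ (by simp), hprime _ (by simp)⟩
  · rintro ⟨h23, h29, h31⟩
    refine ⟨show List.IsChain _ _ by simp, ?_, fun q hq h₁ h₂ => ?_⟩
    · simp only [List.mem_cons, List.not_mem_nil, or_false]
      rintro x (rfl | rfl | rfl | rfl | rfl) <;> assumption
    · simp only [List.headI, List.getLast!, List.getLast] at h₁ h₂
      simp only [List.mem_cons, List.not_mem_nil, or_false]
      by_contra! hq'
      exact not_prime_of_mod_thirty (by omega) (by omega) hq

end Constellation

theorem stmt8 (t : ℕ) (hb : Nat.Prime (30*t+17)) (ha : Nat.Prime (30*t+19)) :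
    ((∀ n, 2 ≤ n → Hseq (30*t+19) n - Hseq (30*t+17) n ≤ 6) ↔
        (Nat.Prime (30*t+23) ∧ Nat.Prime (30*t+29) ∧ Nat.Prime (30*t+31))) ∧
    ((∀ n, 2 ≤ n → Hseq (30*t+19) n - Hseq (30*t+17) n ≤ 6) ↔
        ConsecPrimes [30*t+17, 30*t+19, 30*t+23, 30*t+29, 30*t+31]) := by
  have key := Hseq_sub_le_six_iff ha
  exact ⟨key, key.trans (consecPrimes_iff hb ha).symm⟩
end

section
/- Let t ≥ 0, b = 30t+29, a = 30t+31 be twin primes, and suppose 30t+37 is composite. Then H_a(3) ≥ 30t+41 and H_b(3) = 30t+31, so H_a(3) − H_b(3) ≥ 10. -/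
theorem stmt9 (t : ℕ) (hb : Nat.Prime (30*t+29)) (ha : Nat.Prime (30*t+31))
    (hc : ¬ Nat.Prime (30*t+37)) :
    30*t+41 ≤ Hseq (30*t+31) 3 ∧ Hseq (30*t+29) 3 = 30*t+31 ∧
      10 ≤ Hseq (30*t+31) 3 - Hseq (30*t+29) 3 := by
  have h3 : Nat.Prime 3 := by norm_num
  have hH : ∀ c, Hseq c 3 = sInf {m | c < m ∧ Nat.Prime m} := by
    intro c
    show sInf {m | Hseq c 2 < m ∧ (Nat.Prime m ↔ Nat.Prime 3)} = _
    simp [Hseq, h3]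
  have hb3 : Hseq (30*t+29) 3 = 30*t+31 := by
    rw [hH]
    apply le_antisymm
    · exact Nat.sInf_le ⟨by omega, ha⟩
    · have hne : {m | 30*t+29 < m ∧ Nat.Prime m}.Nonempty := ⟨30*t+31, by omega, ha⟩
      apply le_csInf hne
      rintro m ⟨hm, hp⟩
      by_contra h
      push_neg at h
      have h2 : (2 : ℕ) ∣ m := by omega
      rcases hp.eq_one_or_self_of_dvd 2 h2 with h'' | h'' <;> omega
  have ha3 : 30*t+41 ≤ Hseq (30*t+31) 3 := by
    rw [hH]
    obtain ⟨p, hp1, hp2⟩ := Nat.exists_infinite_primes (30*t+32)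
    have hne : {m | 30*t+31 < m ∧ Nat.Prime m}.Nonempty := ⟨p, by omega, hp2⟩
    apply le_csInf hne
    rintro m ⟨hm, hp⟩
    by_contra h
    push_neg at h
    have hd : m = 30*t+32 ∨ m = 30*t+33 ∨ m = 30*t+34 ∨ m = 30*t+35 ∨ m = 30*t+36
        ∨ m = 30*t+37 ∨ m = 30*t+38 ∨ m = 30*t+39 ∨ m = 30*t+40 := by omega
    rcases hd with h' | h' | h' | h' | h' | h' | h' | h' | h'
    · rcases hp.eq_one_or_self_of_dvd 2 ⟨15*t+16, by omega⟩ with h'' | h'' <;> omega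
    · rcases hp.eq_one_or_self_of_dvd 3 ⟨10*t+11, by omega⟩ with h'' | h'' <;> omega
    · rcases hp.eq_one_or_self_of_dvd 2 ⟨15*t+17, by omega⟩ with h'' | h'' <;> omega
    · rcases hp.eq_one_or_self_of_dvd 5 ⟨6*t+7, by omega⟩ with h'' | h'' <;> omega
    · rcases hp.eq_one_or_self_of_dvd 2 ⟨15*t+18, by omega⟩ with h'' | h'' <;> omega
    · exact hc (h' ▸ hp)
    · rcases hp.eq_one_or_self_of_dvd 2 ⟨15*t+19, by omega⟩ with h'' | h'' <;> omega
    · rcases hp.eq_one_or_self_of_dvd 3 ⟨10*t+13, by omega⟩ with h'' | h'' <;> omega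
    · rcases hp.eq_one_or_self_of_dvd 2 ⟨15*t+20, by omega⟩ with h'' | h'' <;> omega
  exact ⟨ha3, hb3, by omega⟩
end

section
/- Let t ≥ 0, b = 30t+11, a = 30t+13 be twin primes, and suppose 30t+17, 30t+19, 30t+23 are prime but 30t+29 is composite. Then H_a(11) ≥ 30t+31 and H_b(11) = 30t+23, so H_a(11) − H_b(11) ≥ 8, and the least n with H_a(n) − H_b(n) > 6 is n = 11. -/
lemma np_of_dvd (d n : ℕ) (hd : d ∣ n) (h2 : 2 ≤ d) (h3 : d < n) : ¬ n.Prime := by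
  intro hp
  rcases (Nat.Prime.eq_one_or_self_of_dvd hp d hd) with h | h <;> omega

lemma step_comp (a k : ℕ) (ha : ¬ Nat.Prime (a+1)) (hk : ¬ Nat.Prime k) :
    sInf {m | a < m ∧ (Nat.Prime m ↔ Nat.Prime k)} = a + 1 := by
  apply le_antisymm
  · exact Nat.sInf_le ⟨by omega, iff_of_false ha hk⟩
  · have hne : {m | a < m ∧ (Nat.Prime m ↔ Nat.Prime k)}.Nonempty :=
      ⟨a + 1, by omega, iff_of_false ha hk⟩
    exact (Nat.sInf_mem hne).1

lemma step_prime (a b k : ℕ) (hab : a < b) (hb : b.Prime) (hk : k.Prime)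
    (hmid : ∀ m, a < m → m < b → ¬ m.Prime) :
    sInf {m | a < m ∧ (Nat.Prime m ↔ Nat.Prime k)} = b := by
  apply le_antisymm
  · exact Nat.sInf_le ⟨hab, iff_of_true hb hk⟩
  · by_contra h
    push_neg at h
    have hne : {m | a < m ∧ (Nat.Prime m ↔ Nat.Prime k)}.Nonempty :=
      ⟨b, hab, iff_of_true hb hk⟩
    have hm := Nat.sInf_mem hne
    exact hmid _ hm.1 h (hm.2.mpr hk)

lemma step_prime_ge (a b k : ℕ) (hk : k.Prime)
    (hmid : ∀ m, a < m → m < b → ¬ m.Prime) :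
    b ≤ sInf {m | a < m ∧ (Nat.Prime m ↔ Nat.Prime k)} := by
  obtain ⟨p, hpa, hp⟩ := Nat.exists_infinite_primes (a + 1)
  have hne : {m | a < m ∧ (Nat.Prime m ↔ Nat.Prime k)}.Nonempty :=
    ⟨p, by omega, iff_of_true hp hk⟩
  have hm := Nat.sInf_mem hne
  by_contra h
  push_neg at h
  exact hmid _ hm.1 h (hm.2.mpr hk)

theorem stmt12 (t : ℕ) (h11 : Nat.Prime (30*t+11)) (h13 : Nat.Prime (30*t+13))
    (h17 : Nat.Prime (30*t+17)) (h19 : Nat.Prime (30*t+19)) (h23 : Nat.Prime (30*t+23))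
    (h29 : ¬ Nat.Prime (30*t+29)) :
    30*t+31 ≤ Hseq (30*t+13) 11 ∧ Hseq (30*t+11) 11 = 30*t+23 ∧
      8 ≤ Hseq (30*t+13) 11 - Hseq (30*t+11) 11 ∧
      IsLeast {n | 2 ≤ n ∧ 6 < Hseq (30*t+13) n - Hseq (30*t+11) n} 11 := by
  -- compositeness facts
  have c12 : ¬ Nat.Prime (30*t+12) := np_of_dvd 2 _ ⟨15*t+6, by ring⟩ (by omega) (by omega)
  have c14 : ¬ Nat.Prime (30*t+14) := np_of_dvd 2 _ ⟨15*t+7, by ring⟩ (by omega) (by omega)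
  have c15 : ¬ Nat.Prime (30*t+15) := np_of_dvd 3 _ ⟨10*t+5, by ring⟩ (by omega) (by omega)
  have c16 : ¬ Nat.Prime (30*t+16) := np_of_dvd 2 _ ⟨15*t+8, by ring⟩ (by omega) (by omega)
  have c18 : ¬ Nat.Prime (30*t+18) := np_of_dvd 2 _ ⟨15*t+9, by ring⟩ (by omega) (by omega)
  have c20 : ¬ Nat.Prime (30*t+20) := np_of_dvd 2 _ ⟨15*t+10, by ring⟩ (by omega) (by omega)
  have c21 : ¬ Nat.Prime (30*t+21) := np_of_dvd 3 _ ⟨10*t+7, by ring⟩ (by omega) (by omega)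
  have c22 : ¬ Nat.Prime (30*t+22) := np_of_dvd 2 _ ⟨15*t+11, by ring⟩ (by omega) (by omega)
  have c24 : ¬ Nat.Prime (30*t+24) := np_of_dvd 2 _ ⟨15*t+12, by ring⟩ (by omega) (by omega)
  have c25 : ¬ Nat.Prime (30*t+25) := np_of_dvd 5 _ ⟨6*t+5, by ring⟩ (by omega) (by omega)
  have c26 : ¬ Nat.Prime (30*t+26) := np_of_dvd 2 _ ⟨15*t+13, by ring⟩ (by omega) (by omega)
  have c27 : ¬ Nat.Prime (30*t+27) := np_of_dvd 3 _ ⟨10*t+9, by ring⟩ (by omega) (by omega)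
  have c28 : ¬ Nat.Prime (30*t+28) := np_of_dvd 2 _ ⟨15*t+14, by ring⟩ (by omega) (by omega)
  have c30 : ¬ Nat.Prime (30*t+30) := np_of_dvd 2 _ ⟨15*t+15, by ring⟩ (by omega) (by omega)
  have p3 : Nat.Prime 3 := by norm_num
  have p5 : Nat.Prime 5 := by norm_num
  have p7 : Nat.Prime 7 := by norm_num
  have p11 : Nat.Prime 11 := by norm_num
  have n4 : ¬ Nat.Prime 4 := by norm_num
  have n6 : ¬ Nat.Prime 6 := by norm_num
  have n8 : ¬ Nat.Prime 8 := by norm_num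
  have n9 : ¬ Nat.Prime 9 := by norm_num
  have n10 : ¬ Nat.Prime 10 := by norm_num
  -- b-sequence: c = 30t+11
  have b2 : Hseq (30*t+11) 2 = 30*t+11 := rfl
  have b3 : Hseq (30*t+11) 3 = 30*t+13 := by
    show sInf _ = _
    rw [b2]
    exact step_prime _ _ 3 (by omega) h13 p3 (fun m h1 h2 => by
      have : m = 30*t+12 := by omega
      rwa [this])
  have b4 : Hseq (30*t+11) 4 = 30*t+14 := by
    show sInf _ = _
    rw [b3]
    exact step_comp _ 4 c14 n4
  have b5 : Hseq (30*t+11) 5 = 30*t+17 := by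
    show sInf _ = _
    rw [b4]
    exact step_prime _ _ 5 (by omega) h17 p5 (fun m h1 h2 => by
      rcases (by omega : m = 30*t+15 ∨ m = 30*t+16) with h | h <;> rw [h]
      · exact c15
      · exact c16)
  have b6 : Hseq (30*t+11) 6 = 30*t+18 := by
    show sInf _ = _
    rw [b5]
    exact step_comp _ 6 c18 n6
  have b7 : Hseq (30*t+11) 7 = 30*t+19 := by
    show sInf _ = _
    rw [b6]
    exact step_prime _ _ 7 (by omega) h19 p7 (fun m h1 h2 => by omega)
  have b8 : Hseq (30*t+11) 8 = 30*t+20 := by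
    show sInf _ = _
    rw [b7]
    exact step_comp _ 8 c20 n8
  have b9 : Hseq (30*t+11) 9 = 30*t+21 := by
    show sInf _ = _
    rw [b8]
    exact step_comp _ 9 c21 n9
  have b10 : Hseq (30*t+11) 10 = 30*t+22 := by
    show sInf _ = _
    rw [b9]
    exact step_comp _ 10 c22 n10
  have b11 : Hseq (30*t+11) 11 = 30*t+23 := by
    show sInf _ = _
    rw [b10]
    exact step_prime _ _ 11 (by omega) h23 p11 (fun m h1 h2 => by omega)
  -- a-sequence: c = 30t+13
  have a2 : Hseq (30*t+13) 2 = 30*t+13 := rfl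
  have a3 : Hseq (30*t+13) 3 = 30*t+17 := by
    show sInf _ = _
    rw [a2]
    exact step_prime _ _ 3 (by omega) h17 p3 (fun m h1 h2 => by
      rcases (by omega : m = 30*t+14 ∨ m = 30*t+15 ∨ m = 30*t+16) with h | h | h <;> rw [h]
      · exact c14
      · exact c15
      · exact c16)
  have a4 : Hseq (30*t+13) 4 = 30*t+18 := by
    show sInf _ = _
    rw [a3]
    exact step_comp _ 4 c18 n4
  have a5 : Hseq (30*t+13) 5 = 30*t+19 := by
    show sInf _ = _
    rw [a4]
    exact step_prime _ _ 5 (by omega) h19 p5 (fun m h1 h2 => by omega)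
  have a6 : Hseq (30*t+13) 6 = 30*t+20 := by
    show sInf _ = _
    rw [a5]
    exact step_comp _ 6 c20 n6
  have a7 : Hseq (30*t+13) 7 = 30*t+23 := by
    show sInf _ = _
    rw [a6]
    exact step_prime _ _ 7 (by omega) h23 p7 (fun m h1 h2 => by
      rcases (by omega : m = 30*t+21 ∨ m = 30*t+22) with h | h <;> rw [h]
      · exact c21
      · exact c22)
  have a8 : Hseq (30*t+13) 8 = 30*t+24 := by
    show sInf _ = _
    rw [a7]
    exact step_comp _ 8 c24 n8
  have a9 : Hseq (30*t+13) 9 = 30*t+25 := by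
    show sInf _ = _
    rw [a8]
    exact step_comp _ 9 c25 n9
  have a10 : Hseq (30*t+13) 10 = 30*t+26 := by
    show sInf _ = _
    rw [a9]
    exact step_comp _ 10 c26 n10
  have a11 : 30*t+31 ≤ Hseq (30*t+13) 11 := by
    show _ ≤ sInf _
    rw [a10]
    exact step_prime_ge _ _ 11 p11 (fun m h1 h2 => by
      rcases (by omega : m = 30*t+27 ∨ m = 30*t+28 ∨ m = 30*t+29 ∨ m = 30*t+30) with h | h | h | h <;> rw [h]
      · exact c27
      · exact c28
      · exact h29
      · exact c30)
  refine ⟨a11, b11, by omega, ⟨by simp; omega, ?_⟩⟩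
  intro n hn
  simp only [Set.mem_setOf_eq] at hn
  by_contra hlt
  push_neg at hlt
  interval_cases n <;> omega
end

section
/- Let t ≥ 0, b = 30t+11, a = 30t+13 be twin primes, and suppose 30t+17, 30t+19, 30t+23, 30t+29 are prime but 30t+31 is composite. Then H_a(13) ≥ 30t+37 and H_b(13) = 30t+29, so the least n with H_a(n) − H_b(n) > 6 is n = 13. -/
lemma np (p q m : ℕ) (hp : p ≠ 1) (hq : q ≠ 1) (h : m = p * q) : ¬ m.Prime :=
  h ▸ Nat.not_prime_mul hp hq

lemma Hstep_true (x y : ℕ) (P : Prop) (hP : P) (hxy : x < y) (hy : Nat.Prime y)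
    (hmid : ∀ m, x < m → m < y → ¬ Nat.Prime m) :
    sInf {m | x < m ∧ (Nat.Prime m ↔ P)} = y := by
  refine IsLeast.csInf_eq ⟨⟨hxy, iff_of_true hy hP⟩, ?_⟩
  rintro m ⟨hm1, hm2⟩
  by_contra h
  exact hmid m hm1 (by omega) (hm2.mpr hP)

lemma Hstep_false (x y : ℕ) (P : Prop) (hP : ¬P) (hxy : y = x + 1) (hy : ¬ Nat.Prime y) :
    sInf {m | x < m ∧ (Nat.Prime m ↔ P)} = y := by
  subst hxy
  refine IsLeast.csInf_eq ⟨⟨by omega, iff_of_false hy hP⟩, ?_⟩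
  rintro m ⟨hm1, _⟩; omega

theorem stmt13 (t : ℕ) (h11 : Nat.Prime (30*t+11)) (h13 : Nat.Prime (30*t+13))
    (h17 : Nat.Prime (30*t+17)) (h19 : Nat.Prime (30*t+19)) (h23 : Nat.Prime (30*t+23))
    (h29 : Nat.Prime (30*t+29)) (h31 : ¬ Nat.Prime (30*t+31)) :
    30*t+37 ≤ Hseq (30*t+13) 13 ∧ Hseq (30*t+11) 13 = 30*t+29 ∧
      IsLeast {n | 2 ≤ n ∧ 6 < Hseq (30*t+13) n - Hseq (30*t+11) n} 13 := by
  set B := 30*t+11 with hB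
  set A := 30*t+13 with hA
  have b2 : Hseq B 2 = B := rfl
  have a2 : Hseq A 2 = A := rfl
  -- B sequence
  have b3 : Hseq B 3 = 30*t+13 := by
    rw [show (3:ℕ) = 0+3 from rfl, Hseq]; simp only [Nat.reduceAdd]; rw [b2, hB]
    refine Hstep_true _ _ _ (by norm_num) (by omega) h13 ?_
    intro m h1 h2
    have : m = 30*t+12 := by omega
    exact np 2 (15*t+6) m (by omega) (by omega) (by rw [this]; ring)
  have b4 : Hseq B 4 = 30*t+14 := by
    rw [show (4:ℕ) = 1+3 from rfl, Hseq]; simp only [Nat.reduceAdd]; rw [b3]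
    exact Hstep_false _ _ _ (by norm_num) (by omega)
      (np 2 (15*t+7) _ (by omega) (by omega) (by ring))
  have b5 : Hseq B 5 = 30*t+17 := by
    rw [show (5:ℕ) = 2+3 from rfl, Hseq]; simp only [Nat.reduceAdd]; rw [b4]
    refine Hstep_true _ _ _ (by norm_num) (by omega) h17 ?_
    intro m h1 h2
    have : m = 30*t+15 ∨ m = 30*t+16 := by omega
    rcases this with h | h
    · exact np 3 (10*t+5) m (by omega) (by omega) (by rw [h]; ring)
    · exact np 2 (15*t+8) m (by omega) (by omega) (by rw [h]; ring)
  have b6 : Hseq B 6 = 30*t+18 := by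
    rw [show (6:ℕ) = 3+3 from rfl, Hseq]; simp only [Nat.reduceAdd]; rw [b5]
    exact Hstep_false _ _ _ (by norm_num) (by omega)
      (np 2 (15*t+9) _ (by omega) (by omega) (by ring))
  have b7 : Hseq B 7 = 30*t+19 := by
    rw [show (7:ℕ) = 4+3 from rfl, Hseq]; simp only [Nat.reduceAdd]; rw [b6]
    exact Hstep_true _ _ _ (by norm_num) (by omega) h19 (fun m h1 h2 => by omega)
  have b8 : Hseq B 8 = 30*t+20 := by
    rw [show (8:ℕ) = 5+3 from rfl, Hseq]; simp only [Nat.reduceAdd]; rw [b7]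
    exact Hstep_false _ _ _ (by norm_num) (by omega)
      (np 2 (15*t+10) _ (by omega) (by omega) (by ring))
  have b9 : Hseq B 9 = 30*t+21 := by
    rw [show (9:ℕ) = 6+3 from rfl, Hseq]; simp only [Nat.reduceAdd]; rw [b8]
    exact Hstep_false _ _ _ (by norm_num) (by omega)
      (np 3 (10*t+7) _ (by omega) (by omega) (by ring))
  have b10 : Hseq B 10 = 30*t+22 := by
    rw [show (10:ℕ) = 7+3 from rfl, Hseq]; simp only [Nat.reduceAdd]; rw [b9]
    exact Hstep_false _ _ _ (by norm_num) (by omega)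
      (np 2 (15*t+11) _ (by omega) (by omega) (by ring))
  have b11 : Hseq B 11 = 30*t+23 := by
    rw [show (11:ℕ) = 8+3 from rfl, Hseq]; simp only [Nat.reduceAdd]; rw [b10]
    exact Hstep_true _ _ _ (by norm_num) (by omega) h23 (fun m h1 h2 => by omega)
  have b12 : Hseq B 12 = 30*t+24 := by
    rw [show (12:ℕ) = 9+3 from rfl, Hseq]; simp only [Nat.reduceAdd]; rw [b11]
    exact Hstep_false _ _ _ (by norm_num) (by omega)
      (np 2 (15*t+12) _ (by omega) (by omega) (by ring))
  have b13 : Hseq B 13 = 30*t+29 := by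
    rw [show (13:ℕ) = 10+3 from rfl, Hseq]; simp only [Nat.reduceAdd]; rw [b12]
    refine Hstep_true _ _ _ (by norm_num) (by omega) h29 ?_
    intro m h1 h2
    have : m = 30*t+25 ∨ m = 30*t+26 ∨ m = 30*t+27 ∨ m = 30*t+28 := by omega
    rcases this with h | h | h | h
    · exact np 5 (6*t+5) m (by omega) (by omega) (by rw [h]; ring)
    · exact np 2 (15*t+13) m (by omega) (by omega) (by rw [h]; ring)
    · exact np 3 (10*t+9) m (by omega) (by omega) (by rw [h]; ring)
    · exact np 2 (15*t+14) m (by omega) (by omega) (by rw [h]; ring)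
  -- A sequence
  have a3 : Hseq A 3 = 30*t+17 := by
    rw [show (3:ℕ) = 0+3 from rfl, Hseq]; simp only [Nat.reduceAdd]; rw [a2, hA]
    refine Hstep_true _ _ _ (by norm_num) (by omega) h17 ?_
    intro m h1 h2
    have : m = 30*t+14 ∨ m = 30*t+15 ∨ m = 30*t+16 := by omega
    rcases this with h | h | h
    · exact np 2 (15*t+7) m (by omega) (by omega) (by rw [h]; ring)
    · exact np 3 (10*t+5) m (by omega) (by omega) (by rw [h]; ring)
    · exact np 2 (15*t+8) m (by omega) (by omega) (by rw [h]; ring)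
  have a4 : Hseq A 4 = 30*t+18 := by
    rw [show (4:ℕ) = 1+3 from rfl, Hseq]; simp only [Nat.reduceAdd]; rw [a3]
    exact Hstep_false _ _ _ (by norm_num) (by omega)
      (np 2 (15*t+9) _ (by omega) (by omega) (by ring))
  have a5 : Hseq A 5 = 30*t+19 := by
    rw [show (5:ℕ) = 2+3 from rfl, Hseq]; simp only [Nat.reduceAdd]; rw [a4]
    exact Hstep_true _ _ _ (by norm_num) (by omega) h19 (fun m h1 h2 => by omega)
  have a6 : Hseq A 6 = 30*t+20 := by
    rw [show (6:ℕ) = 3+3 from rfl, Hseq]; simp only [Nat.reduceAdd]; rw [a5]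
    exact Hstep_false _ _ _ (by norm_num) (by omega)
      (np 2 (15*t+10) _ (by omega) (by omega) (by ring))
  have a7 : Hseq A 7 = 30*t+23 := by
    rw [show (7:ℕ) = 4+3 from rfl, Hseq]; simp only [Nat.reduceAdd]; rw [a6]
    refine Hstep_true _ _ _ (by norm_num) (by omega) h23 ?_
    intro m h1 h2
    have : m = 30*t+21 ∨ m = 30*t+22 := by omega
    rcases this with h | h
    · exact np 3 (10*t+7) m (by omega) (by omega) (by rw [h]; ring)
    · exact np 2 (15*t+11) m (by omega) (by omega) (by rw [h]; ring)
  have a8 : Hseq A 8 = 30*t+24 := by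
    rw [show (8:ℕ) = 5+3 from rfl, Hseq]; simp only [Nat.reduceAdd]; rw [a7]
    exact Hstep_false _ _ _ (by norm_num) (by omega)
      (np 2 (15*t+12) _ (by omega) (by omega) (by ring))
  have a9 : Hseq A 9 = 30*t+25 := by
    rw [show (9:ℕ) = 6+3 from rfl, Hseq]; simp only [Nat.reduceAdd]; rw [a8]
    exact Hstep_false _ _ _ (by norm_num) (by omega)
      (np 5 (6*t+5) _ (by omega) (by omega) (by ring))
  have a10 : Hseq A 10 = 30*t+26 := by
    rw [show (10:ℕ) = 7+3 from rfl, Hseq]; simp only [Nat.reduceAdd]; rw [a9]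
    exact Hstep_false _ _ _ (by norm_num) (by omega)
      (np 2 (15*t+13) _ (by omega) (by omega) (by ring))
  have a11 : Hseq A 11 = 30*t+29 := by
    rw [show (11:ℕ) = 8+3 from rfl, Hseq]; simp only [Nat.reduceAdd]; rw [a10]
    refine Hstep_true _ _ _ (by norm_num) (by omega) h29 ?_
    intro m h1 h2
    have : m = 30*t+27 ∨ m = 30*t+28 := by omega
    rcases this with h | h
    · exact np 3 (10*t+9) m (by omega) (by omega) (by rw [h]; ring)
    · exact np 2 (15*t+14) m (by omega) (by omega) (by rw [h]; ring)
  have a12 : Hseq A 12 = 30*t+30 := by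
    rw [show (12:ℕ) = 9+3 from rfl, Hseq]; simp only [Nat.reduceAdd]; rw [a11]
    exact Hstep_false _ _ _ (by norm_num) (by omega)
      (np 2 (15*t+15) _ (by omega) (by omega) (by ring))
  have a13 : 30*t+37 ≤ Hseq A 13 := by
    rw [show (13:ℕ) = 10+3 from rfl, Hseq]; simp only [Nat.reduceAdd]; rw [a12]
    refine le_csInf ?_ ?_
    · obtain ⟨p, hp1, hp2⟩ := Nat.exists_infinite_primes (30*t+31)
      exact ⟨p, by omega, iff_of_true hp2 (by norm_num)⟩
    · rintro m ⟨hm1, hm2⟩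
      by_contra h
      push_neg at h
      have hm : m.Prime := hm2.mpr (by norm_num)
      have : m = 30*t+31 ∨ m = 30*t+32 ∨ m = 30*t+33 ∨ m = 30*t+34 ∨ m = 30*t+35 ∨
          m = 30*t+36 := by omega
      rcases this with h | h | h | h | h | h
      · exact h31 (h ▸ hm)
      · exact np 2 (15*t+16) m (by omega) (by omega) (by rw [h]; ring) hm
      · exact np 3 (10*t+11) m (by omega) (by omega) (by rw [h]; ring) hm
      · exact np 2 (15*t+17) m (by omega) (by omega) (by rw [h]; ring) hm
      · exact np 5 (6*t+7) m (by omega) (by omega) (by rw [h]; ring) hm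
      · exact np 2 (15*t+18) m (by omega) (by omega) (by rw [h]; ring) hm
  refine ⟨a13, b13, ⟨by norm_num, by rw [b13]; omega⟩, ?_⟩
  intro n hn
  obtain ⟨hn2, hn6⟩ := hn
  by_contra h
  push_neg at h
  interval_cases n <;> omega
end

section
/- Let t ≥ 0, b = 30t+11, a = 30t+13 be twin primes, and suppose 30t+17, 30t+19 are prime but 30t+23 is composite. Then H_a(7) ≥ 30t+29 and H_b(7) = 30t+19, so the least n with H_a(n) − H_b(n) > 6 is n = 7. -/
lemma not_prime_of_dvd (d m : ℕ) (hd : 2 ≤ d) (h2 : d ∣ m) (hm : m ≠ d) : ¬ m.Prime :=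
  fun hp => hm (((Nat.Prime.eq_one_or_self_of_dvd hp d h2).resolve_left (by omega)).symm)

lemma Hstep (c n k : ℕ) (h1 : Hseq c (n+2) < k) (h2 : Nat.Prime k ↔ Nat.Prime (n+3))
    (h3 : ∀ m, Hseq c (n+2) < m → (Nat.Prime m ↔ Nat.Prime (n+3)) → k ≤ m) :
    Hseq c (n+3) = k := by
  rw [Hseq]
  exact le_antisymm (Nat.sInf_le ⟨h1, h2⟩)
    (le_csInf ⟨k, ⟨h1, h2⟩⟩ fun m hm => h3 m hm.1 hm.2)

lemma Hstep_ge (c n k : ℕ) (hne : ∃ m, Hseq c (n+2) < m ∧ (Nat.Prime m ↔ Nat.Prime (n+3)))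
    (h3 : ∀ m, Hseq c (n+2) < m → (Nat.Prime m ↔ Nat.Prime (n+3)) → k ≤ m) :
    k ≤ Hseq c (n+3) := by
  rw [Hseq]
  exact le_csInf hne fun m hm => h3 m hm.1 hm.2

theorem stmt14 (t : ℕ) (h11 : Nat.Prime (30*t+11)) (h13 : Nat.Prime (30*t+13))
    (h17 : Nat.Prime (30*t+17)) (h19 : Nat.Prime (30*t+19)) (h23 : ¬ Nat.Prime (30*t+23)) :
    30*t+29 ≤ Hseq (30*t+13) 7 ∧ Hseq (30*t+11) 7 = 30*t+19 ∧
      IsLeast {n | 2 ≤ n ∧ 6 < Hseq (30*t+13) n - Hseq (30*t+11) n} 7 := by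
  have e12 : ¬ Nat.Prime (30*t+12) := not_prime_of_dvd 2 _ le_rfl ⟨15*t+6, by ring⟩ (by omega)
  have e14 : ¬ Nat.Prime (30*t+14) := not_prime_of_dvd 2 _ le_rfl ⟨15*t+7, by ring⟩ (by omega)
  have e15 : ¬ Nat.Prime (30*t+15) := not_prime_of_dvd 3 _ (by norm_num) ⟨10*t+5, by ring⟩ (by omega)
  have e16 : ¬ Nat.Prime (30*t+16) := not_prime_of_dvd 2 _ le_rfl ⟨15*t+8, by ring⟩ (by omega)
  have e18 : ¬ Nat.Prime (30*t+18) := not_prime_of_dvd 2 _ le_rfl ⟨15*t+9, by ring⟩ (by omega)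
  have e20 : ¬ Nat.Prime (30*t+20) := not_prime_of_dvd 2 _ le_rfl ⟨15*t+10, by ring⟩ (by omega)
  have e21 : ¬ Nat.Prime (30*t+21) := not_prime_of_dvd 3 _ (by norm_num) ⟨10*t+7, by ring⟩ (by omega)
  have e22 : ¬ Nat.Prime (30*t+22) := not_prime_of_dvd 2 _ le_rfl ⟨15*t+11, by ring⟩ (by omega)
  have e24 : ¬ Nat.Prime (30*t+24) := not_prime_of_dvd 2 _ le_rfl ⟨15*t+12, by ring⟩ (by omega)
  have e25 : ¬ Nat.Prime (30*t+25) := not_prime_of_dvd 5 _ (by norm_num) ⟨6*t+5, by ring⟩ (by omega)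
  have e26 : ¬ Nat.Prime (30*t+26) := not_prime_of_dvd 2 _ le_rfl ⟨15*t+13, by ring⟩ (by omega)
  have e27 : ¬ Nat.Prime (30*t+27) := not_prime_of_dvd 3 _ (by norm_num) ⟨10*t+9, by ring⟩ (by omega)
  have e28 : ¬ Nat.Prime (30*t+28) := not_prime_of_dvd 2 _ le_rfl ⟨15*t+14, by ring⟩ (by omega)
  -- b-chain, b = 30t+11
  have hb2 : Hseq (30*t+11) 2 = 30*t+11 := rfl
  have hb3 : Hseq (30*t+11) 3 = 30*t+13 := by
    refine Hstep _ 0 _ ?_ (iff_of_true h13 (by norm_num)) ?_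
    · rw [hb2]; omega
    · intro m hm hp
      rw [hb2] at hm
      have hpm : Nat.Prime m := hp.mpr (by norm_num)
      by_contra h
      exact e12 ((show m = 30*t+12 by omega) ▸ hpm)
  have hb4 : Hseq (30*t+11) 4 = 30*t+14 := by
    refine Hstep _ 1 _ ?_ (iff_of_false e14 (by norm_num)) ?_
    · rw [hb3]; omega
    · intro m hm hp; rw [hb3] at hm; omega
  have hb5 : Hseq (30*t+11) 5 = 30*t+17 := by
    refine Hstep _ 2 _ ?_ (iff_of_true h17 (by norm_num)) ?_
    · rw [hb4]; omega
    · intro m hm hp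
      rw [hb4] at hm
      have hpm : Nat.Prime m := hp.mpr (by norm_num)
      by_contra h
      have : m = 30*t+15 ∨ m = 30*t+16 := by omega
      rcases this with h' | h' <;> subst h' <;> [exact e15 hpm; exact e16 hpm]
  have hb6 : Hseq (30*t+11) 6 = 30*t+18 := by
    refine Hstep _ 3 _ ?_ (iff_of_false e18 (by norm_num)) ?_
    · rw [hb5]; omega
    · intro m hm hp; rw [hb5] at hm; omega
  have hb7 : Hseq (30*t+11) 7 = 30*t+19 := by
    refine Hstep _ 4 _ ?_ (iff_of_true h19 (by norm_num)) ?_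
    · rw [hb6]; omega
    · intro m hm hp; rw [hb6] at hm; omega
  -- a-chain, a = 30t+13
  have ha2 : Hseq (30*t+13) 2 = 30*t+13 := rfl
  have ha3 : Hseq (30*t+13) 3 = 30*t+17 := by
    refine Hstep _ 0 _ ?_ (iff_of_true h17 (by norm_num)) ?_
    · rw [ha2]; omega
    · intro m hm hp
      rw [ha2] at hm
      have hpm : Nat.Prime m := hp.mpr (by norm_num)
      by_contra h
      have : m = 30*t+14 ∨ m = 30*t+15 ∨ m = 30*t+16 := by omega
      rcases this with h' | h' | h' <;> subst h' <;>
        [exact e14 hpm; exact e15 hpm; exact e16 hpm]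
  have ha4 : Hseq (30*t+13) 4 = 30*t+18 := by
    refine Hstep _ 1 _ ?_ (iff_of_false e18 (by norm_num)) ?_
    · rw [ha3]; omega
    · intro m hm hp; rw [ha3] at hm; omega
  have ha5 : Hseq (30*t+13) 5 = 30*t+19 := by
    refine Hstep _ 2 _ ?_ (iff_of_true h19 (by norm_num)) ?_
    · rw [ha4]; omega
    · intro m hm hp; rw [ha4] at hm; omega
  have ha6 : Hseq (30*t+13) 6 = 30*t+20 := by
    refine Hstep _ 3 _ ?_ (iff_of_false e20 (by norm_num)) ?_
    · rw [ha5]; omega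
    · intro m hm hp; rw [ha5] at hm; omega
  have ha7 : 30*t+29 ≤ Hseq (30*t+13) 7 := by
    refine Hstep_ge _ 4 _ ?_ ?_
    · obtain ⟨p, hple, hp⟩ := Nat.exists_infinite_primes (30*t+21)
      exact ⟨p, by rw [ha6]; omega, iff_of_true hp (by norm_num)⟩
    · intro m hm hp
      rw [ha6] at hm
      have hpm : Nat.Prime m := hp.mpr (by norm_num)
      by_contra h
      have : m = 30*t+21 ∨ m = 30*t+22 ∨ m = 30*t+23 ∨ m = 30*t+24 ∨ m = 30*t+25 ∨
          m = 30*t+26 ∨ m = 30*t+27 ∨ m = 30*t+28 := by omega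
      rcases this with h'|h'|h'|h'|h'|h'|h'|h' <;> subst h' <;>
        [exact e21 hpm; exact e22 hpm; exact h23 hpm; exact e24 hpm; exact e25 hpm;
         exact e26 hpm; exact e27 hpm; exact e28 hpm]
  refine ⟨ha7, hb7, ⟨⟨by norm_num, by rw [hb7]; omega⟩, ?_⟩⟩
  intro n hn
  obtain ⟨hn2, hn6⟩ := hn
  by_contra h
  interval_cases n
  · rw [ha2, hb2] at hn6; omega
  · rw [ha3, hb3] at hn6; omega
  · rw [ha4, hb4] at hn6; omega
  · rw [ha5, hb5] at hn6; omega
  · rw [ha6, hb6] at hn6; omega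
end
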